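/- Let N be a normal subgroup of a group G. If G is a weak* Powers group, then N is a weak* Powers group. -/
import Mathlib


/-- A group `G` is a *weak\* Powers group* if for every `f ∈ G \ {e}` and every integer
`k ≥ 1` there exist a partition `G = D ⊔ E` and elements `g 1, …, g k ∈ G` such that
`f D ∩ D = ∅` and `g i E ∩ g j E = ∅` for all distinct `1 ≤ i, j ≤ k`. -/
def IsWeakStarPowersGroup (G : Type*) [Group G] : Prop :=
  ∀ f : G, f ≠ 1 → ∀ k : ℕ, 1 ≤ k →
    ∃ (D E : Set G) (g : ℕ → G),
      D ∪ E = Set.univ ∧ D ∩ E = ∅ ∧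
      ((fun x => f * x) '' D) ∩ D = ∅ ∧
      (∀ i j, 1 ≤ i → i ≤ k → 1 ≤ j → j ≤ k → i ≠ j →
        ((fun x => g i * x) '' E) ∩ ((fun x => g j * x) '' E) = ∅)

/-- Let `N` be a normal subgroup of a group `G`. If `G` is a weak* Powers group,
then `N` is a weak* Powers group. -/
theorem weakStarPowers_of_normal {G : Type*} [Group G] (N : Subgroup G) (hN : N.Normal)
    (hG : IsWeakStarPowersGroup G) : IsWeakStarPowersGroup ↥N := by
  intro f hf k hk
  have hf' : (f : G) ≠ 1 := by simpa using hf
  obtain ⟨D, E, g', hU, hI, hfD, hdisj⟩ := hG (f : G) hf' (k + 1) (by omega)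
  have hDE : ∀ z : G, z ∈ D ∨ z ∈ E := by
    intro z
    have h : z ∈ D ∪ E := by rw [hU]; exact Set.mem_univ z
    exact h
  have hfD' : ∀ z ∈ D, (f : G) * z ∉ D := by
    intro z hz hz'
    have h : ((f : G) * z) ∈ ((fun x => (f : G) * x) '' D) ∩ D := ⟨⟨z, hz, rfl⟩, hz'⟩
    rw [hfD] at h
    exact h
  have hdis : ∀ a b : ℕ, 1 ≤ a → a ≤ k + 1 → 1 ≤ b → b ≤ k + 1 → a ≠ b →
      ∀ z ∈ E, ∀ w ∈ E, g' a * z ≠ g' b * w := by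
    intro a b ha1 ha2 hb1 hb2 hab z hz w hw heq
    have h : g' a * z ∈ ((fun x => g' a * x) '' E) ∩ ((fun x => g' b * x) '' E) :=
      ⟨⟨z, hz, rfl⟩, ⟨w, hw, heq.symm⟩⟩
    rw [hdisj a b ha1 ha2 hb1 hb2 hab] at h
    exact h
  set g : ℕ → G := fun i => (g' 1)⁻¹ * g' (i + 1) with hg
  -- `g i * E` is disjoint from `E` for `1 ≤ i ≤ k`
  have hgE : ∀ i, 1 ≤ i → i ≤ k → ∀ z ∈ E, ∀ w ∈ E, g i * z ≠ w := by
    intro i h1 h2 z hz w hw heq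
    refine hdis (i + 1) 1 (by omega) (by omega) (by omega) (by omega) (by omega)
      z hz w hw ?_
    simp only [hg] at heq
    rw [← heq]
    group
  -- `g i * E` and `g j * E` are disjoint for distinct `i, j ∈ [1, k]`
  have hgg : ∀ i j, 1 ≤ i → i ≤ k → 1 ≤ j → j ≤ k → i ≠ j →
      ∀ z ∈ E, ∀ w ∈ E, g i * z ≠ g j * w := by
    intro i j hi1 hik hj1 hjk hij z hz w hw heq
    refine hdis (i + 1) (j + 1) (by omega) (by omega) (by omega) (by omega) (by omega)
      z hz w hw ?_
    simp only [hg] at heq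
    calc g' (i + 1) * z = g' 1 * ((g' 1)⁻¹ * g' (i + 1) * z) := by group
      _ = g' 1 * ((g' 1)⁻¹ * g' (j + 1) * w) := by rw [heq]
      _ = g' (j + 1) * w := by group
  set E₀ : Set ↥N :=
    {x : ↥N | ∀ i, 1 ≤ i → i ≤ k → ∃ d ∈ D, (x : G) = (f : G) * g i * d} with hE₀
  set n : ℕ → ↥N := fun i =>
    ⟨(f : G) * (g i * (f : G) * (g i)⁻¹) * ((f : G))⁻¹,
      mul_mem (mul_mem f.2 (hN.conj_mem (f : G) f.2 (g i))) (inv_mem f.2)⟩ with hn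
  -- every element outside `E₀` lies in `f * D`
  have hD0 : ∀ x : ↥N, x ∉ E₀ → ∃ d ∈ D, (x : G) = (f : G) * d := by
    intro x hx
    rw [hE₀] at hx
    simp only [Set.mem_setOf_eq] at hx
    push_neg at hx
    obtain ⟨i, hi1, hik, hnot⟩ := hx
    set z : G := ((f : G) * g i)⁻¹ * (x : G) with hz
    have hxz : (x : G) = (f : G) * g i * z := by rw [hz]; group
    have hzE : z ∈ E := by
      rcases hDE z with h | h
      · exact absurd hxz (hnot z h)
      · exact h
    set w : G := ((f : G))⁻¹ * (x : G) with hw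
    have hwz : g i * z = w := by rw [hw, hz]; group
    have hwD : w ∈ D := by
      rcases hDE w with h | h
      · exact h
      · exact absurd hwz (hgE i hi1 hik z hzE w h)
    exact ⟨w, hwD, by rw [hw]; group⟩
  refine ⟨E₀ᶜ, E₀, n, Set.compl_union_self E₀, Set.compl_inter_self E₀, ?_, ?_⟩
  · -- `f * E₀ᶜ` is disjoint from `E₀ᶜ`
    rw [Set.eq_empty_iff_forall_notMem]
    rintro z ⟨⟨y, hy, rfl⟩, hz⟩
    obtain ⟨d1, hd1, he1⟩ := hD0 y hy
    obtain ⟨d2, hd2, he2⟩ := hD0 (f * y) hz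
    have hc : ((f * y : ↥N) : G) = (f : G) * (y : G) := rfl
    have h3 : (f : G) * d1 = d2 := by
      apply mul_left_cancel (a := (f : G))
      rw [← he2, hc, he1]
    exact hfD' d1 hd1 (h3 ▸ hd2)
  · -- the translates `n i * E₀` are pairwise disjoint
    intro i j hi1 hik hj1 hjk hij
    rw [Set.eq_empty_iff_forall_notMem]
    rintro z ⟨⟨x, hx, hxz⟩, ⟨y, hy, hyz⟩⟩
    rw [hE₀] at hx hy
    obtain ⟨di, hdi, hex⟩ := hx i hi1 hik
    obtain ⟨dj, hdj, hey⟩ := hy j hj1 hjk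
    have h : n i * x = n j * y := hxz.trans hyz.symm
    have hc : ((n i : ↥N) : G) * (x : G) = ((n j : ↥N) : G) * (y : G) := by
      have := congrArg (Subtype.val) h
      push_cast at this
      exact this
    have hni : ((n i : ↥N) : G) = (f : G) * (g i * (f : G) * (g i)⁻¹) * ((f : G))⁻¹ := by
      rw [hn]
    have hnj : ((n j : ↥N) : G) = (f : G) * (g j * (f : G) * (g j)⁻¹) * ((f : G))⁻¹ := by
      rw [hn]
    have hfdiE : (f : G) * di ∈ E := by
      rcases hDE ((f : G) * di) with h' | h'
      · exact absurd h' (hfD' di hdi)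
      · exact h'
    have hfdjE : (f : G) * dj ∈ E := by
      rcases hDE ((f : G) * dj) with h' | h'
      · exact absurd h' (hfD' dj hdj)
      · exact h'
    have key : g i * ((f : G) * di) = g j * ((f : G) * dj) := by
      apply mul_left_cancel (a := (f : G))
      calc (f : G) * (g i * ((f : G) * di))
          = ((n i : ↥N) : G) * (x : G) := by rw [hni, hex]; group
        _ = ((n j : ↥N) : G) * (y : G) := hc
        _ = (f : G) * (g j * ((f : G) * dj)) := by rw [hnj, hey]; group
    exact hgg i j hi1 hik hj1 hjk hij _ hfdiE _ hfdjE key
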